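/- Let α > −1 and R > 0. The identity y_{n+1}·ȳ_n = (y_n·x̄_n + x_{n+1}·ȳ_n)·(y_{n+1}·x̄_{n+1} + x_{n+2}·ȳ_{n+1}) / ((x_n + x̄_{n+1})·(x_{n+1} + x̄_{n+2})) holds for all integers n ≥ 1 if and only if α = 0. -/

import Mathlib

open Polynomial

/-- `x_n = α + (2n² + 2(R−1)n − R)/((n−1)+R)`. -/
noncomputable def xKL (α R : ℝ) (n : ℕ) : ℝ :=
  α + (2 * (n : ℝ) ^ 2 + 2 * (R - 1) * (n : ℝ) - R) / (((n : ℝ) - 1) + R)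

/-- `y_n = n(n+α)(n+1+R)/(n+R)`. -/
noncomputable def yKL (α R : ℝ) (n : ℕ) : ℝ :=
  (n : ℝ) * ((n : ℝ) + α) * ((n : ℝ) + 1 + R) / ((n : ℝ) + R)

/-- `x̄_n = α + (2n² + 2(R−1)n − R)/(n+R)`. -/
noncomputable def xbarKL (α R : ℝ) (n : ℕ) : ℝ :=
  α + (2 * (n : ℝ) ^ 2 + 2 * (R - 1) * (n : ℝ) - R) / ((n : ℝ) + R)

/-- `ȳ_n = n(n+α)(n−1+R)/(n+R)`. -/
noncomputable def ybarKL (α R : ℝ) (n : ℕ) : ℝ :=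
  (n : ℝ) * ((n : ℝ) + α) * ((n : ℝ) - 1 + R) / ((n : ℝ) + R)

/- Write the identity as `y_{n+1} ȳ_n = N / D`. Clearing denominators,
`y_{n+1} ȳ_n D - N = -8 n (n+1) α (α+n) (α+n+1) (α+2n+1) / ((n+R)(n+1+R))`,
and for `n ≥ 1`, `α > -1` we have `D > 0` and every factor but `α` is nonzero.
So the identity already fails at each single `n ≥ 1` unless `α = 0`. -/

noncomputable def numKL (α R : ℝ) (n : ℕ) : ℝ :=
  yKL α R n * xbarKL α R n + xKL α R (n + 1) * ybarKL α R n

noncomputable def denKL (α R : ℝ) (n : ℕ) : ℝ :=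
  xKL α R n + xbarKL α R (n + 1)

section

variable {α R : ℝ} {n : ℕ}

theorem xKL_eq (h : (n : ℝ) - 1 + R ≠ 0) :
    xKL α R n = α + 2 * n - 1 + ((n : ℝ) - 1) / ((n : ℝ) - 1 + R) := by
  unfold xKL
  field_simp
  ring

theorem xbarKL_eq (h : (n : ℝ) + R ≠ 0) :
    xbarKL α R n = α + 2 * n - 2 + R / ((n : ℝ) + R) := by
  unfold xbarKL
  field_simp
  ring

theorem denKL_pos (hα : -1 < α) (hR : 0 < R) (hn : 1 ≤ n) : 0 < denKL α R n := by
  have hn' : (1 : ℝ) ≤ n := by exact_mod_cast hn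
  have h₀ : 0 < (n : ℝ) - 1 + R := by linarith
  have h₁ : 0 < ((n + 1 : ℕ) : ℝ) + R := by push_cast; linarith
  rw [denKL, xKL_eq h₀.ne', xbarKL_eq h₁.ne']
  have : 0 ≤ ((n : ℝ) - 1) / ((n : ℝ) - 1 + R) := div_nonneg (by linarith) h₀.le
  have : 0 ≤ R / (((n + 1 : ℕ) : ℝ) + R) := div_nonneg hR.le h₁.le
  push_cast at *
  linarith

theorem yKL_mul_ybarKL_mul_denKL_sub_numKL (h : 0 < (n : ℝ) - 1 + R) :
    yKL α R (n + 1) * ybarKL α R n * (denKL α R n * denKL α R (n + 1)) -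
        numKL α R n * numKL α R (n + 1) =
      -8 * n * (n + 1) * α * (α + n) * (α + n + 1) * (α + 2 * n + 1) /
        (((n : ℝ) + R) * ((n : ℝ) + 1 + R)) := by
  have h₀ : (n : ℝ) - 1 + R ≠ 0 := h.ne'
  have h₁ : (n : ℝ) + R ≠ 0 := by linarith
  have h₂ : (n : ℝ) + 1 + R ≠ 0 := by linarith
  have h₃ : (n : ℝ) + 1 + 1 + R ≠ 0 := by linarith
  simp only [numKL, denKL, xKL, xbarKL, yKL, ybarKL]
  push_cast
  simp only [add_sub_cancel_right]
  rw [eq_div_iff (mul_ne_zero h₁ h₂)]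
  field_simp
  ring

theorem yKL_succ_mul_ybarKL_eq_iff (hα : -1 < α) (hR : 0 < R) (hn : 1 ≤ n) :
    yKL α R (n + 1) * ybarKL α R n =
        numKL α R n * numKL α R (n + 1) / (denKL α R n * denKL α R (n + 1)) ↔ α = 0 := by
  have hn' : (1 : ℝ) ≤ n := by exact_mod_cast hn
  have h₀ : 0 < (n : ℝ) - 1 + R := by linarith
  have hD := mul_pos (denKL_pos hα hR hn) (denKL_pos hα hR (hn.trans n.le_succ))
  have hC : 0 < 8 * (n : ℝ) * (n + 1) * (α + n) * (α + n + 1) * (α + 2 * n + 1) := by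
    have : 0 < α + n := by linarith
    have : 0 < α + n + 1 := by linarith
    have : 0 < α + 2 * n + 1 := by linarith
    have : 0 < 8 * (n : ℝ) * (n + 1) := by positivity
    positivity
  rw [eq_div_iff hD.ne', ← sub_eq_zero, yKL_mul_ybarKL_mul_denKL_sub_numKL h₀,
    div_eq_zero_iff, or_iff_left (by positivity)]
  rw [show -8 * (n : ℝ) * (n + 1) * α * (α + n) * (α + n + 1) * (α + 2 * n + 1) =
      α * -(8 * n * (n + 1) * (α + n) * (α + n + 1) * (α + 2 * n + 1)) by ring,
    mul_eq_zero, or_iff_left (neg_ne_zero.mpr hC.ne')]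

end

theorem stmt11 (α R : ℝ) (hα : -1 < α) (hR : 0 < R) :
    (∀ n : ℕ, 1 ≤ n →
      yKL α R (n + 1) * ybarKL α R n =
        (yKL α R n * xbarKL α R n + xKL α R (n + 1) * ybarKL α R n) *
          (yKL α R (n + 1) * xbarKL α R (n + 1) + xKL α R (n + 2) * ybarKL α R (n + 1)) /
        ((xKL α R n + xbarKL α R (n + 1)) * (xKL α R (n + 1) + xbarKL α R (n + 2))))
    ↔ α = 0 :=
  ⟨fun h ↦ (yKL_succ_mul_ybarKL_eq_iff hα hR le_rfl).1 (h 1 le_rfl),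
    fun hα₀ n hn ↦ (yKL_succ_mul_ybarKL_eq_iff hα hR hn).2 hα₀⟩
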